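/- Suppose q^H (A - θ I)^{-1} q ≠ 0 and let s be the unique solution of the alternating two-sided Jacobi–Davidson right correction equation (I - (q p^H)/(p^H q))(A - θ I)(I - q q^H) s = -r_q with constraint q^H s = 0. Then s does not lie in the column space of Q if and only if (A - θ I)^{-1} q ≠ Q Q^H (A - θ I)^{-1} q, where Q Q^H is the orthogonal projector onto the column space of Q. -/

import Mathlib

/-!
Write `B = A - θ I`. Since `qᴴ s = 0`, the right projector acts trivially on `s`, and the left
projector only removes a multiple of `q`; so the correction equation says `B (s + q) = γ q` for
some scalar `γ`, i.e. `s + q = γ B⁻¹ q`. Applying `qᴴ` gives `1 = γ qᴴ B⁻¹ q`, so `γ ≠ 0`.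
As `q` lies in the column space of `Q`, so does `s` iff `B⁻¹ q` does, and since `Q Qᴴ` is the
projector onto that space this means `B⁻¹ q = Q Qᴴ B⁻¹ q`.
-/

open Matrix

namespace Matrix

variable {R : Type*} {m : Type*}

theorem mul_fin_one_eq_smul [CommSemiring R] (v : Matrix m (Fin 1) R)
    (M : Matrix (Fin 1) (Fin 1) R) : v * M = M 0 0 • v := by
  ext i j
  fin_cases j
  simp [mul_apply, mul_comm (v i 0)]

section CommRing

variable [CommRing R] [Fintype m] [DecidableEq m]

theorem one_sub_smul_mul_mul (c : R) (q v : Matrix m (Fin 1) R) (w : Matrix (Fin 1) m R) :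
    (1 - c • (q * w)) * v = v - (c * (w * v) 0 0) • q := by
  rw [Matrix.sub_mul, Matrix.one_mul, Matrix.smul_mul, Matrix.mul_assoc, mul_fin_one_eq_smul,
    smul_smul]

theorem exists_mul_add_eq_smul_of_correction_eq (B : Matrix m m R) (c : R)
    (q s : Matrix m (Fin 1) R) (u w : Matrix (Fin 1) m R) (hus : u * s = 0)
    (hs : (1 - c • (q * w)) * B * (1 - q * u) * s = -(B * q)) :
    ∃ γ : R, B * (s + q) = γ • q := by
  have hproj : (1 - q * u) * s = s := by
    rw [Matrix.sub_mul, Matrix.one_mul, Matrix.mul_assoc, hus, Matrix.mul_zero, sub_zero]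
  rw [Matrix.mul_assoc, hproj, Matrix.mul_assoc, one_sub_smul_mul_mul] at hs
  set γ := c * (w * (B * s)) 0 0
  exact ⟨γ, by rw [Matrix.mul_add, sub_eq_iff_eq_add.mp hs]; abel⟩

theorem ne_zero_and_add_eq_smul_inv_mul [Nontrivial R] {B : Matrix m m R} (hB : IsUnit B)
    {q s : Matrix m (Fin 1) R} {u : Matrix (Fin 1) m R} (huq : u * q = 1) (hus : u * s = 0)
    {γ : R} (hγ : B * (s + q) = γ • q) :
    γ ≠ 0 ∧ s + q = γ • (B⁻¹ * q) := by
  have hsum : s + q = γ • (B⁻¹ * q) := by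
    rw [← Matrix.mul_smul, ← hγ, ← Matrix.mul_assoc,
      nonsing_inv_mul B ((isUnit_iff_isUnit_det B).mp hB), Matrix.one_mul]
  have hu_sum : u * (s + q) = 1 := by rw [Matrix.mul_add, hus, huq, zero_add]
  refine ⟨fun hγ0 => (one_ne_zero : (1 : Matrix (Fin 1) (Fin 1) R) ≠ 0) ?_, hsum⟩
  rw [← hu_sum, hsum, hγ0, zero_smul, Matrix.mul_zero]

end CommRing

theorem exists_eq_mul_iff_eq_mul_mul [Semiring R] {n : Type*} [Fintype m] [Fintype n]
    [DecidableEq n] {Q : Matrix m n R} {P : Matrix n m R} (hPQ : P * Q = 1)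
    (v : Matrix m (Fin 1) R) :
    (∃ c : Matrix n (Fin 1) R, v = Q * c) ↔ v = Q * P * v := by
  constructor
  · rintro ⟨c, rfl⟩
    rw [Matrix.mul_assoc Q, ← Matrix.mul_assoc P, hPQ, Matrix.one_mul]
  · intro hv
    exact ⟨P * v, by rw [← Matrix.mul_assoc]; exact hv⟩

theorem exists_eq_mul_iff_of_add_eq_smul {K : Type*} [Field K] {n : Type*} [Fintype n]
    {Q : Matrix m n K} {q s x : Matrix m (Fin 1) K} (hq : ∃ c : Matrix n (Fin 1) K, q = Q * c)
    {γ : K} (hγ : γ ≠ 0) (hsum : s + q = γ • x) :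
    (∃ c : Matrix n (Fin 1) K, s = Q * c) ↔ ∃ c : Matrix n (Fin 1) K, x = Q * c := by
  obtain ⟨c₀, rfl⟩ := hq
  constructor
  · rintro ⟨d, rfl⟩
    refine ⟨γ⁻¹ • (d + c₀), ?_⟩
    rw [Matrix.mul_smul, Matrix.mul_add, hsum, smul_smul, inv_mul_cancel₀ hγ, one_smul]
  · rintro ⟨d, rfl⟩
    refine ⟨γ • d - c₀, ?_⟩
    rw [Matrix.mul_sub, Matrix.mul_smul, ← hsum, add_sub_cancel_right]

end Matrix

theorem alternating_two_sided_jd_right_expansion_iff_general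
    {n k : ℕ} (A : Matrix (Fin n) (Fin n) ℂ)
    (Q : Matrix (Fin n) (Fin k) ℂ) (hQ : Qᴴ * Q = 1)
    (q : Matrix (Fin n) (Fin 1) ℂ) (hqnorm : qᴴ * q = 1)
    (hqQ : ∃ c : Matrix (Fin k) (Fin 1) ℂ, q = Q * c)
    (p : Matrix (Fin n) (Fin 1) ℂ)
    (θ : ℂ)
    (hA : IsUnit (A - θ • (1 : Matrix (Fin n) (Fin n) ℂ)))
    (rq : Matrix (Fin n) (Fin 1) ℂ)
    (hrq : rq = (A - θ • 1) * q)
    (s : Matrix (Fin n) (Fin 1) ℂ)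
    (hs₁ : qᴴ * s = 0)
    (hs₂ : (1 - ((pᴴ * q) 0 0)⁻¹ • (q * pᴴ)) * (A - θ • 1) * (1 - q * qᴴ) * s = -rq) :
    (¬ ∃ c : Matrix (Fin k) (Fin 1) ℂ, s = Q * c) ↔
      (A - θ • (1 : Matrix (Fin n) (Fin n) ℂ))⁻¹ * q ≠
        Q * Qᴴ * ((A - θ • (1 : Matrix (Fin n) (Fin n) ℂ))⁻¹ * q) := by
  subst hrq
  obtain ⟨γ, hγ⟩ := exists_mul_add_eq_smul_of_correction_eq _ _ q s qᴴ pᴴ hs₁ hs₂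
  obtain ⟨hγ0, hsum⟩ := ne_zero_and_add_eq_smul_inv_mul hA hqnorm hs₁ hγ
  rw [exists_eq_mul_iff_of_add_eq_smul hqQ hγ0 hsum, exists_eq_mul_iff_eq_mul_mul hQ]

/-- If `qᴴ (A - θ I)⁻¹ q ≠ 0` and `s` is the unique solution of the alternating
two-sided Jacobi–Davidson right correction equation, then `s` is not in the
column space of `Q` iff `(A - θ I)⁻¹ q ≠ Q Qᴴ (A - θ I)⁻¹ q`. -/
theorem alternating_two_sided_jd_right_expansion_iff
    {n k : ℕ} (A : Matrix (Fin n) (Fin n) ℂ)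
    (Q : Matrix (Fin n) (Fin k) ℂ) (hQ : Qᴴ * Q = 1)
    (q : Matrix (Fin n) (Fin 1) ℂ) (hqnorm : qᴴ * q = 1)
    (hqQ : ∃ c : Matrix (Fin k) (Fin 1) ℂ, q = Q * c)
    (p : Matrix (Fin n) (Fin 1) ℂ)
    (hpq : (pᴴ * q) 0 0 ≠ 0)
    (θ : ℂ) (hθ : θ = (pᴴ * A * q) 0 0 / (pᴴ * q) 0 0)
    (hA : IsUnit (A - θ • (1 : Matrix (Fin n) (Fin n) ℂ)))
    (rq : Matrix (Fin n) (Fin 1) ℂ)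
    (hrq : rq = (A - θ • 1) * q)
    (hα : (qᴴ * (A - θ • (1 : Matrix (Fin n) (Fin n) ℂ))⁻¹ * q) 0 0 ≠ 0)
    (s : Matrix (Fin n) (Fin 1) ℂ)
    (hs₁ : qᴴ * s = 0)
    (hs₂ : (1 - ((pᴴ * q) 0 0)⁻¹ • (q * pᴴ)) * (A - θ • 1) * (1 - q * qᴴ) * s = -rq) :
    (¬ ∃ c : Matrix (Fin k) (Fin 1) ℂ, s = Q * c) ↔
      (A - θ • (1 : Matrix (Fin n) (Fin n) ℂ))⁻¹ * q ≠
        Q * Qᴴ * ((A - θ • (1 : Matrix (Fin n) (Fin n) ℂ))⁻¹ * q) :=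
  alternating_two_sided_jd_right_expansion_iff_general A Q hQ q hqnorm hqQ p θ hA rq hrq s hs₁ hs₂
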